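/- Let (g₂,g₃,B) and (g₂',g₃',B') be triples in ℂ³ with Δ = g₂³−27g₃² ≠ 0 and Δ' = g₂'³−27g₃'² ≠ 0. Define j = 1728·g₂³/Δ, j₁ = B⁴g₂/Δ, j₂ = B²g₂²/Δ, j₃ = B³g₃/Δ, and similarly j', j₁', j₂', j₃' for the primed triple. Then the two triples are scalar equivalent (i.e. there exists u ∈ ℂˣ with g₂' = u²g₂, g₃' = u³g₃, B' = uB) if and only if j = j', j₁ = j₁', j₂ = j₂' and j₃ = j₃'. In particular (j, j₁, j₂, j₃) is a complete system of invariants for scalar equivalence of Lamé operators L₁. -/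
import Mathlib


/-- Two Lamé triples `(g₂, g₃, B)` and `(g₂', g₃', B')` (with nonvanishing discriminants
`Δ = g₂³ - 27g₃²`, `Δ' = g₂'³ - 27g₃'²`) are scalar equivalent, i.e. related by
`(g₂', g₃', B') = (u²g₂, u³g₃, uB)` for some `u ∈ ℂˣ`, if and only if the four invariants
`j = 1728 g₂³/Δ`, `j₁ = B⁴g₂/Δ`, `j₂ = B²g₂²/Δ`, `j₃ = B³g₃/Δ` agree for the two
triples. -/
theorem scalarEquiv_iff_invariants_eq
    (g₂ g₃ B g₂' g₃' B' : ℂ)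
    (hΔ : g₂ ^ 3 - 27 * g₃ ^ 2 ≠ 0) (hΔ' : g₂' ^ 3 - 27 * g₃' ^ 2 ≠ 0) :
    (∃ u : ℂˣ, g₂' = (u : ℂ) ^ 2 * g₂ ∧ g₃' = (u : ℂ) ^ 3 * g₃ ∧ B' = (u : ℂ) * B) ↔
      (1728 * g₂ ^ 3 / (g₂ ^ 3 - 27 * g₃ ^ 2) =
          1728 * g₂' ^ 3 / (g₂' ^ 3 - 27 * g₃' ^ 2) ∧
        B ^ 4 * g₂ / (g₂ ^ 3 - 27 * g₃ ^ 2) =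
          B' ^ 4 * g₂' / (g₂' ^ 3 - 27 * g₃' ^ 2) ∧
        B ^ 2 * g₂ ^ 2 / (g₂ ^ 3 - 27 * g₃ ^ 2) =
          B' ^ 2 * g₂' ^ 2 / (g₂' ^ 3 - 27 * g₃' ^ 2) ∧
        B ^ 3 * g₃ / (g₂ ^ 3 - 27 * g₃ ^ 2) =
          B' ^ 3 * g₃' / (g₂' ^ 3 - 27 * g₃' ^ 2)) := by
  constructor
  · rintro ⟨u, rfl, rfl, rfl⟩
    refine ⟨?_, ?_, ?_, ?_⟩ <;>
      rw [div_eq_div_iff hΔ hΔ'] <;> ring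
  · rintro ⟨hj, hj1, hj2, hj3⟩
    rw [div_eq_div_iff hΔ hΔ'] at hj hj1 hj2 hj3
    -- key : g₂ ^ 3 * g₃' ^ 2 = g₂' ^ 3 * g₃ ^ 2
    have key : g₂ ^ 3 * g₃' ^ 2 = g₂' ^ 3 * g₃ ^ 2 := by
      linear_combination (-1 / 46656 : ℂ) * hj
    by_cases hg2 : g₂ = 0
    · -- then g₃ ≠ 0, g₂' = 0, g₃' ≠ 0
      have hg3 : g₃ ≠ 0 := by intro h; apply hΔ; rw [hg2, h]; ring
      have hg2' : g₂' = 0 := by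
        have : g₂' ^ 3 * g₃ ^ 2 = 0 := by rw [← key, hg2]; ring
        rcases mul_eq_zero.1 this with h | h
        · exact pow_eq_zero_iff (by norm_num) |>.1 h
        · exact absurd (pow_eq_zero_iff (by norm_num) |>.1 h) hg3
      have hg3' : g₃' ≠ 0 := by intro h; apply hΔ'; rw [hg2', h]; ring
      -- from hj3 : B ^ 3 * g₃' = B' ^ 3 * g₃
      have hB3 : B ^ 3 * g₃' = B' ^ 3 * g₃ := by
        have h : B ^ 3 * g₃ * (-27 * g₃' ^ 2) = B' ^ 3 * g₃' * (-27 * g₃ ^ 2) := by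
          rw [hg2, hg2'] at hj3; linear_combination hj3
        have h2 : g₃ * g₃' * (B ^ 3 * g₃' - B' ^ 3 * g₃) = 0 := by
          linear_combination (-1 / 27 : ℂ) * h
        rcases mul_eq_zero.1 h2 with h3 | h3
        · rcases mul_eq_zero.1 h3 with h4 | h4
          · exact absurd h4 hg3
          · exact absurd h4 hg3'
        · linear_combination h3
      by_cases hB0 : B = 0
      · have hB'0 : B' = 0 := by
          have : B' ^ 3 * g₃ = 0 := by rw [← hB3, hB0]; ring
          rcases mul_eq_zero.1 this with h | h
          · exact pow_eq_zero_iff (by norm_num) |>.1 h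
          · exact absurd h hg3
        obtain ⟨v, hv⟩ :=
          IsAlgClosed.exists_pow_nat_eq (k := ℂ) (g₃' / g₃) (n := 3) (by norm_num)
        have hv0 : v ≠ 0 := by
          intro h
          apply hg3'
          have h2 : g₃' / g₃ = 0 := by rw [← hv, h]; ring
          exact (div_eq_zero_iff.1 h2).elim id fun h3 => absurd h3 hg3
        refine ⟨Units.mk0 v hv0, ?_, ?_, ?_⟩
        · rw [hg2', hg2]; ring
        · simp only [Units.val_mk0]
          rw [hv, div_mul_cancel₀ _ hg3]
        · rw [hB'0, hB0]; ring
      · have hB'0 : B' ≠ 0 := by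
          intro h
          apply hB0
          have h2 : B ^ 3 * g₃' = 0 := by rw [hB3, h]; ring
          rcases mul_eq_zero.1 h2 with h3 | h3
          · exact pow_eq_zero_iff (by norm_num) |>.1 h3
          · exact absurd h3 hg3'
        have hu0 : B' / B ≠ 0 := div_ne_zero hB'0 hB0
        refine ⟨Units.mk0 _ hu0, ?_, ?_, ?_⟩
        · simp only [Units.val_mk0]; rw [hg2', hg2]; ring
        · simp only [Units.val_mk0]
          rw [div_pow, div_mul_eq_mul_div, eq_div_iff (pow_ne_zero 3 hB0)]
          linear_combination hB3
        · simp only [Units.val_mk0]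
          rw [div_mul_cancel₀ _ hB0]
    · -- g₂ ≠ 0
      have hg2' : g₂' ≠ 0 := by
        intro h
        have h2 : 1728 * g₂ ^ 3 * (g₂' ^ 3 - 27 * g₃' ^ 2) = 0 := by
          rw [hj, h]; ring
        rcases mul_eq_zero.1 h2 with h3 | h3
        · rcases mul_eq_zero.1 h3 with h4 | h4
          · norm_num at h4
          · exact hg2 (pow_eq_zero_iff (by norm_num) |>.1 h4)
        · exact hΔ' h3
      by_cases hB0 : B = 0
      · have hB'0 : B' = 0 := by
          have h : B' ^ 2 * g₂' ^ 2 * (g₂ ^ 3 - 27 * g₃ ^ 2) = 0 := by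
            rw [← hj2, hB0]; ring
          rcases mul_eq_zero.1 h with h2 | h2
          · rcases mul_eq_zero.1 h2 with h3 | h3
            · exact pow_eq_zero_iff (by norm_num) |>.1 h3
            · exact absurd (pow_eq_zero_iff (by norm_num) |>.1 h3) hg2'
          · exact absurd h2 hΔ
        obtain ⟨v, hv⟩ :=
          IsAlgClosed.exists_pow_nat_eq (k := ℂ) (g₂' / g₂) (n := 2) (by norm_num)
        have hv0 : v ≠ 0 := by
          intro h
          apply hg2'
          have h2 : g₂' / g₂ = 0 := by rw [← hv, h]; ring
          exact (div_eq_zero_iff.1 h2).elim id fun h3 => absurd h3 hg2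
        have hg2eq : g₂' = v ^ 2 * g₂ := by rw [hv, div_mul_cancel₀ _ hg2]
        have hsq : (g₃' - v ^ 3 * g₃) * (g₃' + v ^ 3 * g₃) = 0 := by
          have h : g₂ ^ 3 * (g₃' ^ 2 - (v ^ 3 * g₃) ^ 2) = 0 := by
            rw [hg2eq] at key; linear_combination key
          rcases mul_eq_zero.1 h with h2 | h2
          · exact absurd (pow_eq_zero_iff (by norm_num) |>.1 h2) hg2
          · linear_combination h2
        rcases mul_eq_zero.1 hsq with h | h
        · refine ⟨Units.mk0 v hv0, hg2eq, ?_, by rw [hB'0, hB0]; ring⟩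
          simp only [Units.val_mk0]
          linear_combination h
        · refine ⟨Units.mk0 (-v) (neg_ne_zero.2 hv0), ?_, ?_, by rw [hB'0, hB0]; ring⟩
          · simp only [Units.val_mk0]; rw [hg2eq]; ring
          · simp only [Units.val_mk0]
            linear_combination h
      · have hB'0 : B' ≠ 0 := by
          intro h
          have h2 : B ^ 2 * g₂ ^ 2 * (g₂' ^ 3 - 27 * g₃' ^ 2) = 0 := by
            rw [hj2, h]; ring
          rcases mul_eq_zero.1 h2 with h3 | h3
          · rcases mul_eq_zero.1 h3 with h4 | h4
            · exact hB0 (pow_eq_zero_iff (by norm_num) |>.1 h4)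
            · exact hg2 (pow_eq_zero_iff (by norm_num) |>.1 h4)
          · exact hΔ' h3
        set u : ℂ := B' / B with hu
        have hu0 : u ≠ 0 := div_ne_zero hB'0 hB0
        have hcross : B ^ 2 * g₂' = B' ^ 2 * g₂ := by
          have h1 : (B ^ 4 * g₂ * (g₂' ^ 3 - 27 * g₃' ^ 2)) *
              (B' ^ 2 * g₂' ^ 2 * (g₂ ^ 3 - 27 * g₃ ^ 2)) =
              (B' ^ 4 * g₂' * (g₂ ^ 3 - 27 * g₃ ^ 2)) *
              (B ^ 2 * g₂ ^ 2 * (g₂' ^ 3 - 27 * g₃' ^ 2)) := by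
            rw [hj1, hj2]
          have h2 : (B ^ 2 * B' ^ 2 * g₂ * g₂' * (g₂ ^ 3 - 27 * g₃ ^ 2) *
              (g₂' ^ 3 - 27 * g₃' ^ 2)) * (B ^ 2 * g₂' - B' ^ 2 * g₂) = 0 := by
            linear_combination h1
          rcases mul_eq_zero.1 h2 with h3 | h3
          · exact absurd h3 (mul_ne_zero (mul_ne_zero (mul_ne_zero (mul_ne_zero
              (mul_ne_zero (pow_ne_zero 2 hB0) (pow_ne_zero 2 hB'0)) hg2) hg2') hΔ) hΔ')
          · linear_combination h3
        have hg2eq : g₂' = u ^ 2 * g₂ := by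
          rw [hu, div_pow, div_mul_eq_mul_div, eq_div_iff (pow_ne_zero 2 hB0)]
          linear_combination hcross
        have hg3sq : g₃' ^ 2 = u ^ 6 * g₃ ^ 2 := by
          have h : g₂ ^ 3 * (g₃' ^ 2 - u ^ 6 * g₃ ^ 2) = 0 := by
            rw [hg2eq] at key; linear_combination key
          rcases mul_eq_zero.1 h with h2 | h2
          · exact absurd (pow_eq_zero_iff (by norm_num) |>.1 h2) hg2
          · linear_combination h2
        have hΔ'eq : g₂' ^ 3 - 27 * g₃' ^ 2 = u ^ 6 * (g₂ ^ 3 - 27 * g₃ ^ 2) := by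
          rw [hg2eq, hg3sq]; ring
        have hBeq : B' = u * B := by rw [hu, div_mul_cancel₀ _ hB0]
        have hg3eq : g₃' = u ^ 3 * g₃ := by
          rw [hΔ'eq, hBeq] at hj3
          have h : u ^ 3 * B ^ 3 * (g₂ ^ 3 - 27 * g₃ ^ 2) * (u ^ 3 * g₃ - g₃') = 0 := by
            linear_combination hj3
          rcases mul_eq_zero.1 h with h2 | h2
          · exact absurd h2 (mul_ne_zero (mul_ne_zero (pow_ne_zero 3 hu0)
              (pow_ne_zero 3 hB0)) hΔ)
          · linear_combination -h2
        exact ⟨Units.mk0 u hu0, hg2eq, hg3eq, hBeq⟩
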